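/- With η̌ = multiplication by Σ_{r=1}^m θ_r ϑ_r in the exterior algebra on θ_1,...,θ_m,ϑ_1,...,ϑ_m, for integers 0 ≤ r < s ≤ m+1 one has η̌^{s−r}(θ⃗_r ϑ⃗_s) = 0, where θ⃗_r = θ_1⋯θ_r and ϑ⃗_s = ϑ_m⋯ϑ_s. -/

import Mathlib

/-! The elements `e_j = θ_j ϑ_j` commute pairwise and square to zero, and `η̌` is left
multiplication by their sum. Since `e_j` kills `θ⃗_r ϑ⃗_s` as soon as `θ_j` or `ϑ_j` already
occurs in it, only the `s - r - 1` indices `r < j < s` survive, and a power of a sum of commuting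
square-zero elements vanishes on such a vector once the exponent exceeds the number of surviving
indices. -/

noncomputable section

/-- Exterior algebra on θ_1,...,θ_m,ϑ_1,...,ϑ_m -/
abbrev ExtA (m : ℕ) := ExteriorAlgebra ℂ ((Fin m ⊕ Fin m) → ℂ)

variable (m : ℕ)

def θv (r : Fin m) : ExtA m := ExteriorAlgebra.ι ℂ (Pi.single (Sum.inl r) 1)
def ϑv (r : Fin m) : ExtA m := ExteriorAlgebra.ι ℂ (Pi.single (Sum.inr r) 1)

/-- the odd superderivation ∂_{θ_r} (left contraction with the dual vector) -/
def dθ (r : Fin m) : Module.End ℂ (ExtA m) :=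
  CliffordAlgebra.contractLeft (Q := (0 : QuadraticForm ℂ ((Fin m ⊕ Fin m) → ℂ)))
    (LinearMap.proj (Sum.inl r))
/-- the odd superderivation ∂_{ϑ_r} -/
def dϑ (r : Fin m) : Module.End ℂ (ExtA m) :=
  CliffordAlgebra.contractLeft (Q := (0 : QuadraticForm ℂ ((Fin m ⊕ Fin m) → ℂ)))
    (LinearMap.proj (Sum.inr r))

/-- Δ̌ = Σ_r ∂_{θ_r}∂_{ϑ_r} -/
def Δc : Module.End ℂ (ExtA m) := ∑ r : Fin m, dθ m r ∘ₗ dϑ m r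
/-- η̌ = multiplication by Σ_r θ_r ϑ_r -/
def ηc : Module.End ℂ (ExtA m) := LinearMap.mulLeft ℂ (∑ r : Fin m, θv m r * ϑv m r)

/-- θ⃗_r = θ_1⋯θ_r (the product of the first r generators θ) -/
def θvec (r : ℕ) : ExtA m := (((List.finRange m).take r).map (θv m)).prod
/-- ϑ⃗_s = ϑ_m ϑ_{m−1}⋯ϑ_s (descending product; equals 1 when s = m+1) -/
def ϑvec (s : ℕ) : ExtA m := ((((List.finRange m).drop (s - 1)).reverse).map (ϑv m)).prod

namespace ExteriorAlgebra

variable {R M κ : Type*} [CommRing R] [AddCommGroup M] [Module R M]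

theorem ι_mul_ι_comm (a b : M) : ι R a * ι R b = -(ι R b * ι R a) :=
  eq_neg_of_add_eq_zero_left (ι_add_mul_swap a b)

theorem ι_mul_prod_map_ι_of_mem (f : κ → M) {l : List κ} {i : κ} (hi : i ∈ l) :
    ι R (f i) * (l.map fun j => ι R (f j)).prod = 0 := by
  induction l with
  | nil => simp at hi
  | cons a l ih =>
    rw [List.map_cons, List.prod_cons, ← mul_assoc]
    rcases List.mem_cons.mp hi with rfl | hi
    · rw [ι_sq_zero, zero_mul]
    · rw [ι_mul_ι_comm, neg_mul, mul_assoc, ih hi, mul_zero, neg_zero]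

theorem commute_ι_mul_ι_ι (a b c : M) : Commute (ι R a * ι R b) (ι R c) := by
  rw [Commute, SemiconjBy, mul_assoc, ι_mul_ι_comm b c, mul_neg, ← mul_assoc, ι_mul_ι_comm a c,
    neg_mul, neg_neg, mul_assoc]

theorem commute_ι_mul_ι (a b c d : M) : Commute (ι R a * ι R b) (ι R c * ι R d) :=
  (commute_ι_mul_ι_ι a b c).mul_right (commute_ι_mul_ι_ι a b d)

theorem ι_mul_ι_mul_self (a b : M) : ι R a * ι R b * (ι R a * ι R b) = 0 := by
  rw [← mul_assoc, (commute_ι_mul_ι_ι a b a).eq, ← mul_assoc, ι_sq_zero, zero_mul, zero_mul]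

end ExteriorAlgebra

/-- Each factor `e j` of the expanded power that does not annihilate the current vector makes
`j` one more annihilating index, since `e j * e j = 0` and the `e i` commute. -/
theorem sum_pow_mul_eq_zero_of_mul_self_eq_zero {A ι : Type*} [Semiring A] [Fintype ι]
    (e : ι → A) (hcomm : Pairwise fun i j => Commute (e i) (e j)) (hsq : ∀ i, e i * e i = 0)
    (S : Finset ι) (x : A) (hx : ∀ j ∉ S, e j * x = 0) (k : ℕ) (hk : S.card < k) :
    (∑ i, e i) ^ k * x = 0 := by
  classical
  induction k generalizing S x with
  | zero => omega
  | succ k ih =>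
    have hsum : (∑ i, e i) * x = ∑ j ∈ S, e j * x := by
      rw [Finset.sum_mul, ← Finset.sum_subset (Finset.subset_univ S) fun j _ hj => hx j hj]
    rw [pow_succ, mul_assoc, hsum, Finset.mul_sum]
    refine Finset.sum_eq_zero fun j hj => ih (S.erase j) (e j * x) (fun i hi => ?_) ?_
    · by_cases hij : i = j
      · rw [hij, ← mul_assoc, hsq, zero_mul]
      · have hiS : i ∉ S := fun h => hi (Finset.mem_erase.mpr ⟨hij, h⟩)
        rw [← mul_assoc, (hcomm hij).eq, mul_assoc, hx i hiS, mul_zero]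
    · rw [Finset.card_erase_of_mem hj]
      have := Finset.card_pos.mpr ⟨j, hj⟩
      omega

theorem Fin.card_filter_val_mem_le {n : ℕ} (t : Finset ℕ) :
    ({j : Fin n | (j : ℕ) ∈ t} : Finset (Fin n)).card ≤ t.card :=
  Finset.card_le_card_of_injOn Fin.val (fun j hj => by simpa using hj) Fin.val_injective.injOn

theorem ηc_pow_apply (k : ℕ) (x : ExtA m) :
    (ηc m ^ k) x = (∑ j, θv m j * ϑv m j) ^ k * x := by
  rw [ηc, LinearMap.pow_mulLeft, LinearMap.mulLeft_apply]

theorem θv_mul_θvec {r : ℕ} {j : Fin m} (hj : (j : ℕ) < r) : θv m j * θvec m r = 0 := by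
  have hmem : j ∈ (List.finRange m).take r := by
    simp only [List.mem_take_iff_getElem, List.length_finRange, List.getElem_finRange]
    exact ⟨j, by omega, rfl⟩
  exact ExteriorAlgebra.ι_mul_prod_map_ι_of_mem (fun i => Pi.single (Sum.inl i) 1) hmem

theorem ϑv_mul_ϑvec {s : ℕ} {j : Fin m} (hj : s ≤ (j : ℕ) + 1) : ϑv m j * ϑvec m s = 0 := by
  have hmem : j ∈ ((List.finRange m).drop (s - 1)).reverse := by
    simp only [List.mem_reverse, List.mem_drop_iff_getElem, List.length_finRange,
      List.getElem_finRange]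
    exact ⟨j - (s - 1), by omega, by ext; simp only [Fin.val_cast]; omega⟩
  exact ExteriorAlgebra.ι_mul_prod_map_ι_of_mem (fun i => Pi.single (Sum.inr i) 1) hmem

theorem θv_mul_ϑv_mul_θvec_mul {r : ℕ} {j : Fin m} (hj : (j : ℕ) < r) (y : ExtA m) :
    θv m j * ϑv m j * (θvec m r * y) = 0 := by
  rw [θv, ϑv, ExteriorAlgebra.ι_mul_ι_comm, ← θv, ← ϑv, neg_mul, mul_assoc,
    ← mul_assoc (θv m j), θv_mul_θvec m hj, zero_mul, mul_zero, neg_zero]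

theorem commute_θv_mul_ϑv_θvec (j : Fin m) (r : ℕ) : Commute (θv m j * ϑv m j) (θvec m r) :=
  Commute.list_prod_right _ _ fun _ hx => by
    obtain ⟨i, -, rfl⟩ := List.mem_map.mp hx
    exact ExteriorAlgebra.commute_ι_mul_ι_ι _ _ _

theorem θv_mul_ϑv_mul_θvec_mul_ϑvec {r s : ℕ} {j : Fin m} (hj : s ≤ (j : ℕ) + 1) :
    θv m j * ϑv m j * (θvec m r * ϑvec m s) = 0 := by
  rw [← mul_assoc, (commute_θv_mul_ϑv_θvec m j r).eq, mul_assoc, mul_assoc, ϑv_mul_ϑvec m hj,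
    mul_zero, mul_zero]

theorem eta_pow_annihilates (r s : ℕ) (hrs : r < s) :
    (ηc m ^ (s - r)) (θvec m r * ϑvec m s) = 0 := by
  rw [ηc_pow_apply]
  -- with 0-based indices, only `r ≤ j < s - 1` can fail to annihilate `θ⃗_r ϑ⃗_s`
  let S : Finset (Fin m) := {j | (j : ℕ) ∈ Finset.Ico r (s - 1)}
  refine sum_pow_mul_eq_zero_of_mul_self_eq_zero _
    (fun i j _ => ExteriorAlgebra.commute_ι_mul_ι _ _ _ _)
    (fun i => ExteriorAlgebra.ι_mul_ι_mul_self _ _) S _ (fun j hj => ?_) _ ?_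
  · obtain hjr | hjs : (j : ℕ) < r ∨ s ≤ (j : ℕ) + 1 := by
      simp only [S, Finset.mem_filter, Finset.mem_univ, true_and, Finset.mem_Ico] at hj
      omega
    · exact θv_mul_ϑv_mul_θvec_mul m hjr _
    · exact θv_mul_ϑv_mul_θvec_mul_ϑvec m hjs
  · calc S.card ≤ (Finset.Ico r (s - 1)).card := Fin.card_filter_val_mem_le _
      _ < s - r := by rw [Nat.card_Ico]; omega
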